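/- arXiv:2401.12935 — 2 statements merged into one kernel-verified Lean document; each statement's English description precedes it below -/
import Mathlib

section
/- For every natural number n, the sum over all integers k ≥ 1 and all strictly increasing tuples 0 ≤ x_1 < x_2 < … < x_k ≤ n of the product ∏_{i=1}^{k−1} (2(x_{i+1} − x_i) − 1) (the empty product for k = 1 being 1) equals 3^n. Equivalently, ∑_{∅ ≠ X ⊆ {0,1,…,n}} ∏ (2·(consecutive gaps of X) − 1) = 3^n. -/
/-!
For `t > m` let `G(m, t)` be the sum of `gapProd (insert t X)` over `X ⊆ {0, …, m}`. Putting a new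
maximum `t` above a largest element `a` multiplies the gap product by `2(t - a) - 1`, so splitting
on whether `m ∈ X` gives `G(m, t) = G(m - 1, t) + (2(t - m) - 1) G(m - 1, m)`, and hence
`G(m, t) = 2 · 3^m (t - m)`. The same split of the sum over all `X ⊆ {0, …, n}`, where `X = ∅`
contributes `1`, gives `3^(n-1) + 1 + G(n - 1, n) = 3^n + 1`.
-/

/-- For a finite set of naturals x₁ < x₂ < … < x_k, the product
∏_{i=1}^{k−1} (2(x_{i+1} − x_i) − 1), equal to 1 when k ≤ 1. -/
def gapProd (X : Finset ℕ) : ℤ :=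
  (((X.sort (· ≤ ·)).zip (X.sort (· ≤ ·)).tail).map
    (fun p => 2 * ((p.2 : ℤ) - (p.1 : ℤ)) - 1)).prod

open Finset

theorem List.consecutivePairs_append_pair {α : Type*} (l : List α) (a b : α) :
    (l ++ [a, b]).consecutivePairs = (l ++ [a]).consecutivePairs ++ [(a, b)] := by
  induction l with
  | nil => rfl
  | cons x l ih =>
    cases l with
    | nil => rfl
    | cons y l => simpa [List.consecutivePairs] using ih

theorem Finset.sort_insert_of_forall_lt {α : Type*} [LinearOrder α] {s : Finset α} {t : α}
    (h : ∀ x ∈ s, x < t) : (insert t s).sort (· ≤ ·) = s.sort (· ≤ ·) ++ [t] := by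
  refine (List.sortedLT_iff_pairwise.mp (sortedLT_sort _)).eq_of_mem_iff ?_ fun x => ?_
  · exact List.pairwise_append.mpr ⟨List.sortedLT_iff_pairwise.mp (sortedLT_sort _),
      List.pairwise_singleton _ _, fun x hx y hy => by simp_all⟩
  · simp [or_comm]

theorem gapProd_empty : gapProd ∅ = 1 := by
  simp [gapProd]

theorem gapProd_singleton (a : ℕ) : gapProd {a} = 1 := by
  simp [gapProd]

theorem gapProd_insert_insert {s : Finset ℕ} {a t : ℕ} (hs : ∀ x ∈ s, x < a) (hat : a < t) :
    gapProd (insert t (insert a s)) = gapProd (insert a s) * (2 * ((t : ℤ) - a) - 1) := by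
  have has : ∀ x ∈ insert a s, x < t := by
    simpa [hat] using fun x hx => (hs x hx).trans hat
  simp only [gapProd, sort_insert_of_forall_lt has,
    sort_insert_of_forall_lt hs, List.append_assoc, List.singleton_append,
    List.consecutivePairs_append_pair, List.map_append, List.prod_append]
  simp

theorem sum_powerset_range_gapProd_insert (m t : ℕ) (h : m < t) :
    ∑ X ∈ (range (m + 1)).powerset, gapProd (insert t X) = 2 * 3 ^ m * ((t : ℤ) - m) := by
  induction m generalizing t with
  | zero =>
    rw [range_one, ← insert_empty, sum_powerset_insert (notMem_empty 0), powerset_empty,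
      sum_singleton, sum_singleton, gapProd_insert_insert (by simp) h]
    simp [gapProd_singleton]
  | succ m ih =>
    have hlast : ∀ X ∈ (range (m + 1)).powerset, gapProd (insert t (insert (m + 1) X)) =
        gapProd (insert (m + 1) X) * (2 * ((t : ℤ) - (m + 1 : ℕ)) - 1) := fun X hX =>
      gapProd_insert_insert (fun x hx => mem_range.mp (mem_powerset.mp hX hx)) h
    rw [range_add_one, sum_powerset_insert notMem_range_self, sum_congr rfl hlast, ← sum_mul,
      ih t (by omega), ih (m + 1) m.lt_succ_self]
    push_cast
    ring

theorem sum_powerset_range_gapProd (n : ℕ) :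
    ∑ X ∈ (range (n + 1)).powerset, gapProd X = 3 ^ n + 1 := by
  induction n with
  | zero =>
    rw [range_one, ← insert_empty, sum_powerset_insert (notMem_empty 0), powerset_empty]
    simp [gapProd_empty, gapProd_singleton]
  | succ n ih =>
    rw [range_add_one, sum_powerset_insert notMem_range_self, ih,
      sum_powerset_range_gapProd_insert n (n + 1) n.lt_succ_self]
    push_cast
    ring

/-- For every n,
∑_{∅ ≠ X ⊆ {0,1,…,n}} ∏ (2·(consecutive gaps of X) − 1) = 3ⁿ. -/
theorem sum_gapProd_eq_three_pow (n : ℕ) :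
    ∑ X ∈ (Finset.range (n+1)).powerset.filter (fun X => X ≠ ∅), gapProd X
      = 3 ^ n := by
  rw [filter_ne', sum_erase_eq_sub (empty_mem_powerset _), sum_powerset_range_gapProd,
    gapProd_empty, add_sub_cancel_right]
end

section
/- Let R be a commutative unital ring, n ≥ 1, and f_1, …, f_n distinct elements of R. For a nonempty subset B = {f_{i_1}, …, f_{i_k}} of F = {f_1,…,f_n} with i_1 < … < i_k, define min B := f_{i_1}, max B := f_{i_k}, η(B) := ∏_{j=1}^{k−1} (f_{i_{j+1}} − f_{i_j} − 1), and η⁺(B) := ∏_{j=1}^{k−1} (f_{i_{j+1}} − f_{i_j} + 1), with η(B) = η⁺(B) = 1 when k = 1. Then: (1) ∑_{∅≠B⊆F} η(B) = η⁺(F); (2) ∑_{∅≠B⊆F} η(B)·max(B) = 1 + (max(F) − 1)·η⁺(F); (3) ∑_{∅≠B⊆F} η(B)·min(B)·max(B) = 1 + (max(F) − 1)(min(F) + 1)·η⁺(F). -/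
/-!
Induct on the index set by adjoining a new minimum `a`. A nonempty subset of `insert a s`
either avoids `a`, or is `{a}`, or is `insert a B` with `∅ ≠ B ⊆ s`, and then
`η(insert a B) = (f (min B) - f a - 1) η(B)` while `max (insert a B) = max B`. Hence for any
weight `w` on the maximum, the sums `A = ∑ η(B) w(max B)` and `N = ∑ η(B) f(min B) w(max B)`
satisfy the closed linear recursion `A' = w a + N - f a A`, `N' = N + f a (A' - A)`, which
`η⁺(insert a s) = (f (min s) - f a + 1) η⁺(s)` solves for `w = 1` and for `w = f`.
-/

variable {R : Type*} [CommRing R]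

/-- η of a subset of indices B = {i₁ < … < i_k} relative to the family f :
∏_{j=1}^{k−1} (f i_{j+1} − f i_j − 1), equal to 1 when k ≤ 1. -/
def etaOf (f : ℕ → R) (B : Finset ℕ) : R :=
  (((B.sort (· ≤ ·)).zip (B.sort (· ≤ ·)).tail).map
    (fun p => f p.2 - f p.1 - 1)).prod

/-- η⁺ of a subset of indices B = {i₁ < … < i_k} relative to the family f :
∏_{j=1}^{k−1} (f i_{j+1} − f i_j + 1), equal to 1 when k ≤ 1. -/
def etaPlusOf (f : ℕ → R) (B : Finset ℕ) : R :=
  (((B.sort (· ≤ ·)).zip (B.sort (· ≤ ·)).tail).map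
    (fun p => f p.2 - f p.1 + 1)).prod

open Finset

section LinearOrder

variable {α M : Type*} [LinearOrder α]

lemma prod_map_zip_tail_sort_insert [CommMonoid M] (g : α × α → M) {a : α} {s : Finset α}
    (hs : s.Nonempty) (has : ∀ b ∈ s, a < b) :
    ((((insert a s).sort (· ≤ ·)).zip ((insert a s).sort (· ≤ ·)).tail).map g).prod
      = g (a, s.min' hs) * (((s.sort (· ≤ ·)).zip (s.sort (· ≤ ·)).tail).map g).prod := by
  rw [sort_insert (· ≤ ·) (fun b hb => (has b hb).le) (fun ha => lt_irrefl a (has a ha))]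
  obtain ⟨b, l, hbl⟩ : ∃ b l, s.sort (· ≤ ·) = b :: l :=
    List.exists_cons_of_ne_nil (by simp [← List.length_pos_iff, hs.card_pos])
  have hb : s.min' hs = b := by simp [min'_eq_sorted_zero, hbl]
  simp [hbl, hb]

lemma min'_insert_of_forall_lt {a : α} {s : Finset α} (has : ∀ b ∈ s, a < b) :
    (insert a s).min' (insert_nonempty a s) = a :=
  le_antisymm (min'_le _ a (mem_insert_self a s)) (le_min' _ _ _ fun b hb =>
    (mem_insert.mp hb).elim (·.ge) fun hb => (has b hb).le)

lemma max'_insert_of_forall_lt {a : α} {s : Finset α} (hs : s.Nonempty)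
    (has : ∀ b ∈ s, a < b) :
    (insert a s).max' (insert_nonempty a s) = s.max' hs := by
  rw [max'_insert a s hs, max_eq_right (has _ (max'_mem s hs)).le]

lemma untopD_min_eq_min' {s : Finset α} (hs : s.Nonempty) (d : α) :
    s.min.untopD d = s.min' hs := by
  rw [← coe_min' hs, WithTop.untopD_coe]

lemma unbotD_max_eq_max' {s : Finset α} (hs : s.Nonempty) (d : α) :
    s.max.unbotD d = s.max' hs := by
  rw [← coe_max' hs, WithBot.unbotD_coe]

lemma untopD_min_insert_of_forall_lt {a : α} {s : Finset α} (has : ∀ b ∈ s, a < b) (d : α) :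
    (insert a s).min.untopD d = a := by
  rw [untopD_min_eq_min' (insert_nonempty a s), min'_insert_of_forall_lt has]

lemma unbotD_max_insert_of_forall_lt {a : α} {s : Finset α} (hs : s.Nonempty)
    (has : ∀ b ∈ s, a < b) (d : α) :
    (insert a s).max.unbotD d = s.max.unbotD d := by
  rw [unbotD_max_eq_max' (insert_nonempty a s), unbotD_max_eq_max' hs,
    max'_insert_of_forall_lt hs has]

end LinearOrder

lemma sum_filter_ne_empty_powerset_insert {α M : Type*} [DecidableEq α] [AddCommMonoid M]
    {a : α} {s : Finset α} (ha : a ∉ s) (g : Finset α → M) :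
    ∑ B ∈ (insert a s).powerset with B ≠ ∅, g B
      = ∑ B ∈ s.powerset with B ≠ ∅, g B + g {a}
        + ∑ B ∈ s.powerset with B ≠ ∅, g (insert a B) := by
  have hinsert : ∑ B ∈ s.powerset, g (insert a B)
      = g {a} + ∑ B ∈ s.powerset with B ≠ ∅, g (insert a B) := by
    rw [filter_ne', ← add_sum_erase _ _ (empty_mem_powerset s), insert_empty]
  simp only [sum_filter, sum_powerset_insert ha, insert_ne_empty, ne_eq, not_false_eq_true,
    if_true]
  rw [hinsert, ← sum_filter, ← sum_filter, add_assoc]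

lemma etaOf_insert_of_forall_lt (f : ℕ → R) {a : ℕ} {s : Finset ℕ} (hs : s.Nonempty)
    (has : ∀ b ∈ s, a < b) :
    etaOf f (insert a s) = (f (s.min' hs) - f a - 1) * etaOf f s :=
  prod_map_zip_tail_sort_insert _ hs has

lemma etaPlusOf_insert_of_forall_lt (f : ℕ → R) {a : ℕ} {s : Finset ℕ} (hs : s.Nonempty)
    (has : ∀ b ∈ s, a < b) :
    etaPlusOf f (insert a s) = (f (s.min' hs) - f a + 1) * etaPlusOf f s :=
  prod_map_zip_tail_sort_insert _ hs has

lemma etaOf_singleton (f : ℕ → R) (a : ℕ) : etaOf f {a} = 1 := by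
  simp [etaOf]

lemma etaPlusOf_singleton (f : ℕ → R) (a : ℕ) : etaPlusOf f {a} = 1 := by
  simp [etaPlusOf]

/- `B.max.unbotD 0` and `B.min.untopD 0` are total versions of `B.max'` and `B.min'`;
the sums below only evaluate them at nonempty `B`. -/

def etaSum (f w : ℕ → R) (s : Finset ℕ) : R :=
  ∑ B ∈ s.powerset with B ≠ ∅, etaOf f B * w (B.max.unbotD 0)

def etaMinSum (f w : ℕ → R) (s : Finset ℕ) : R :=
  ∑ B ∈ s.powerset with B ≠ ∅, etaOf f B * f (B.min.untopD 0) * w (B.max.unbotD 0)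

section Recursion

variable (f w : ℕ → R) {a : ℕ} {s : Finset ℕ}

lemma etaSum_empty : etaSum f w ∅ = 0 := by
  simp [etaSum, filter_singleton]

lemma etaMinSum_empty : etaMinSum f w ∅ = 0 := by
  simp [etaMinSum, filter_singleton]

lemma etaSum_insert_of_forall_lt (has : ∀ b ∈ s, a < b) :
    etaSum f w (insert a s) = w a + etaMinSum f w s - f a * etaSum f w s := by
  have hterm : ∀ B ∈ {B ∈ s.powerset | B ≠ ∅},
      etaOf f (insert a B) * w ((insert a B).max.unbotD 0)
        = etaOf f B * f (B.min.untopD 0) * w (B.max.unbotD 0)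
          - (f a + 1) * (etaOf f B * w (B.max.unbotD 0)) := by
    intro B hB
    obtain ⟨hBs, hB⟩ := mem_filter.mp hB
    have hBne := nonempty_iff_ne_empty.mpr hB
    have haB : ∀ b ∈ B, a < b := fun b hb => has b (mem_powerset.mp hBs hb)
    rw [etaOf_insert_of_forall_lt f hBne haB, unbotD_max_insert_of_forall_lt hBne haB,
      untopD_min_eq_min' hBne]
    ring
  unfold etaSum etaMinSum
  rw [sum_filter_ne_empty_powerset_insert (fun ha => (has a ha).false), sum_congr rfl hterm,
    sum_sub_distrib, ← mul_sum, etaOf_singleton, max_singleton, WithBot.unbotD_coe]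
  ring

lemma etaMinSum_insert_of_forall_lt (has : ∀ b ∈ s, a < b) :
    etaMinSum f w (insert a s)
      = etaMinSum f w s + f a * (etaSum f w (insert a s) - etaSum f w s) := by
  have hterm : ∀ B ∈ {B ∈ s.powerset | B ≠ ∅},
      etaOf f (insert a B) * f ((insert a B).min.untopD 0) * w ((insert a B).max.unbotD 0)
        = f a * (etaOf f (insert a B) * w ((insert a B).max.unbotD 0)) := by
    intro B hB
    rw [untopD_min_insert_of_forall_lt
      (fun b hb => has b (mem_powerset.mp (mem_filter.mp hB).1 hb))]
    ring
  unfold etaSum etaMinSum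
  rw [sum_filter_ne_empty_powerset_insert (fun ha => (has a ha).false),
    sum_filter_ne_empty_powerset_insert (fun ha => (has a ha).false), sum_congr rfl hterm,
    ← mul_sum, min_singleton, WithTop.untopD_coe]
  ring

end Recursion

theorem etaSum_etaMinSum_one (f : ℕ → R) {s : Finset ℕ} (hs : s.Nonempty) :
    etaSum f 1 s = etaPlusOf f s ∧
      etaMinSum f 1 s = (f (s.min' hs) + 1) * etaPlusOf f s - 1 := by
  induction s using Finset.induction_on_min with
  | empty => exact absurd hs not_nonempty_empty
  | insert a s has ih =>
    rw [etaMinSum_insert_of_forall_lt f _ has, etaSum_insert_of_forall_lt f _ has,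
      min'_insert_of_forall_lt has]
    rcases s.eq_empty_or_nonempty with rfl | hs
    · simp only [etaSum_empty, etaMinSum_empty, insert_empty_eq, etaPlusOf_singleton]
      constructor <;> simp only [Pi.one_apply] <;> ring
    · obtain ⟨hA, hN⟩ := ih hs
      rw [hA, hN, etaPlusOf_insert_of_forall_lt f hs has]
      constructor <;> simp only [Pi.one_apply] <;> ring

theorem etaSum_etaMinSum_self (f : ℕ → R) {s : Finset ℕ} (hs : s.Nonempty) :
    etaSum f f s = 1 + (f (s.max' hs) - 1) * etaPlusOf f s ∧
      etaMinSum f f s = 1 + (f (s.max' hs) - 1) * (f (s.min' hs) + 1) * etaPlusOf f s := by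
  induction s using Finset.induction_on_min with
  | empty => exact absurd hs not_nonempty_empty
  | insert a s has ih =>
    rw [etaMinSum_insert_of_forall_lt f _ has, etaSum_insert_of_forall_lt f _ has,
      min'_insert_of_forall_lt has]
    rcases s.eq_empty_or_nonempty with rfl | hs
    · simp only [etaSum_empty, etaMinSum_empty, insert_empty_eq, max'_singleton,
        etaPlusOf_singleton]
      constructor <;> ring
    · obtain ⟨hA, hN⟩ := ih hs
      rw [hA, hN, etaPlusOf_insert_of_forall_lt f hs has, max'_insert_of_forall_lt hs has]
      constructor <;> ring

theorem appendix_summation_identities_general (n : ℕ) (hn : 1 ≤ n) (f : ℕ → R) :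
    (∑ B ∈ ((Finset.Icc 1 n).powerset.filter (fun B => B ≠ ∅)).attach,
        etaOf f B.1
      = etaPlusOf f (Finset.Icc 1 n)) ∧
    (∑ B ∈ ((Finset.Icc 1 n).powerset.filter (fun B => B ≠ ∅)).attach,
        etaOf f B.1 *
          f (B.1.max' (Finset.nonempty_iff_ne_empty.mpr (Finset.mem_filter.mp B.2).2))
      = 1 + (f n - 1) * etaPlusOf f (Finset.Icc 1 n)) ∧
    (∑ B ∈ ((Finset.Icc 1 n).powerset.filter (fun B => B ≠ ∅)).attach,
        etaOf f B.1 *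
          f (B.1.min' (Finset.nonempty_iff_ne_empty.mpr (Finset.mem_filter.mp B.2).2)) *
          f (B.1.max' (Finset.nonempty_iff_ne_empty.mpr (Finset.mem_filter.mp B.2).2))
      = 1 + (f n - 1) * (f 1 + 1) * etaPlusOf f (Finset.Icc 1 n)) := by
  have hne : (Icc 1 n).Nonempty := nonempty_Icc.mpr hn
  have hmax : (Icc 1 n).max' hne = n :=
    (isGreatest_max' _ hne).unique (by rw [coe_Icc]; exact isGreatest_Icc hn)
  have hmin : (Icc 1 n).min' hne = 1 :=
    (isLeast_min' _ hne).unique (by rw [coe_Icc]; exact isLeast_Icc hn)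
  obtain ⟨hsum, -⟩ := etaSum_etaMinSum_one f hne
  obtain ⟨hmaxSum, hminMaxSum⟩ := etaSum_etaMinSum_self f hne
  rw [hmax, hmin] at hminMaxSum
  rw [hmax] at hmaxSum
  simp only [← unbotD_max_eq_max' _ 0, ← untopD_min_eq_min' _ 0,
    sum_attach _ (fun B => etaOf f B),
    sum_attach _ (fun B => etaOf f B * f (B.max.unbotD 0)),
    sum_attach _ (fun B => etaOf f B * f (B.min.untopD 0) * f (B.max.unbotD 0))]
  refine ⟨?_, hmaxSum, hminMaxSum⟩
  simpa [etaSum] using hsum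

/-- appendix summation identities. Let f₁, …, fₙ (n ≥ 1) be
distinct elements of a commutative unital ring, F = {f₁,…,fₙ}, and for a nonempty
subset B = {f_{i₁}, …, f_{i_k}} (i₁ < … < i_k) set min B = f_{i₁}, max B = f_{i_k},
η(B) = ∏ (f_{i_{j+1}} − f_{i_j} − 1) and η⁺(B) = ∏ (f_{i_{j+1}} − f_{i_j} + 1).
Then (1) ∑_{∅≠B⊆F} η(B) = η⁺(F);
(2) ∑_{∅≠B⊆F} η(B)·max(B) = 1 + (max F − 1)·η⁺(F);
(3) ∑_{∅≠B⊆F} η(B)·min(B)·max(B) = 1 + (max F − 1)(min F + 1)·η⁺(F). -/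
theorem appendix_summation_identities (n : ℕ) (hn : 1 ≤ n) (f : ℕ → R)
    (hf : Set.InjOn f (Set.Icc 1 n)) :
    (∑ B ∈ ((Finset.Icc 1 n).powerset.filter (fun B => B ≠ ∅)).attach,
        etaOf f B.1
      = etaPlusOf f (Finset.Icc 1 n)) ∧
    (∑ B ∈ ((Finset.Icc 1 n).powerset.filter (fun B => B ≠ ∅)).attach,
        etaOf f B.1 *
          f (B.1.max' (Finset.nonempty_iff_ne_empty.mpr (Finset.mem_filter.mp B.2).2))
      = 1 + (f n - 1) * etaPlusOf f (Finset.Icc 1 n)) ∧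
    (∑ B ∈ ((Finset.Icc 1 n).powerset.filter (fun B => B ≠ ∅)).attach,
        etaOf f B.1 *
          f (B.1.min' (Finset.nonempty_iff_ne_empty.mpr (Finset.mem_filter.mp B.2).2)) *
          f (B.1.max' (Finset.nonempty_iff_ne_empty.mpr (Finset.mem_filter.mp B.2).2))
      = 1 + (f n - 1) * (f 1 + 1) * etaPlusOf f (Finset.Icc 1 n)) :=
  appendix_summation_identities_general n hn f
end
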